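/- arXiv:2006.06136 — 2 statements merged into one kernel-verified Lean document; each statement's English description precedes it below -/
import Mathlib

section
/- Let β* minimize the population logistic risk β ↦ E[-Y·Xβ + log(1 + exp(Xβ))] over ℝ^p, where X is a random row vector and Y ∈ {0,1} with E[Y|X] = exp(Xβ*)/(1 + exp(Xβ*)). Then for any β with |Xβ| ≤ M and |Xβ*| ≤ M almost surely, E[l(Y,X;β) - l(Y,X;β*)] ≥ s · E[(X(β - β*))^2], where s = e^M/(2(1+e^M)^2). -/
/-!
Write `η = Xβ`, `η* = Xβ*` and `Δ = η - η*`. Pointwise the excess loss is the Bregman divergence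
of the softplus function `log (1 + exp ·)` between `η` and `η*`, plus `Δ · (σ(η*) - Y)` with `σ`
the logistic function. Since `Δ` is a function of `X`, the second term integrates to zero once `Y`
is replaced by `E[Y|X] = σ(η*)`. The Bregman divergence is at least `s Δ²`, because the second
derivative `exp x / (1 + exp x)² = 1 / (2 (1 + cosh x))` of softplus is at least `2 s` on `[-M, M]`.
-/

open MeasureTheory Set Real

/-- The logistic loss `l(Y, X; b) = -Y·Xb + log(1 + exp(Xb))`. -/
noncomputable def logLoss {p : ℕ} (X : Fin p → ℝ) (Y : ℝ) (b : Fin p → ℝ) : ℝ :=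
  -Y * (∑ j, X j * b j) + Real.log (1 + Real.exp (∑ j, X j * b j))

lemma ConvexOn.add_mul_sub_le_of_hasDerivAt {S : Set ℝ} {f : ℝ → ℝ} {f' x y : ℝ}
    (hf : ConvexOn ℝ S f) (hx : x ∈ S) (hy : y ∈ S) (hd : HasDerivAt f f' x) :
    f x + f' * (y - x) ≤ f y := by
  rcases lt_trichotomy x y with hxy | rfl | hxy
  · have := hf.le_slope_of_hasDerivAt hx hy hxy hd
    rw [slope_def_field, le_div_iff₀ (sub_pos.mpr hxy)] at this
    linarith
  · simp
  · have := hf.slope_le_of_hasDerivAt hy hx hxy hd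
    rw [slope_def_field, div_le_iff₀ (sub_pos.mpr hxy)] at this
    linarith

lemma add_mul_sub_add_mul_sq_le_of_hasDerivAt {S : Set ℝ} (hS : Convex ℝ S)
    {f f' f'' : ℝ → ℝ} {s x y : ℝ} (hf : ∀ z, HasDerivAt f (f' z) z)
    (hf' : ∀ z, HasDerivAt f' (f'' z) z) (hf'' : ∀ z ∈ interior S, 2 * s ≤ f'' z)
    (hx : x ∈ S) (hy : y ∈ S) :
    f x + f' x * (y - x) + s * (y - x) ^ 2 ≤ f y := by
  have hsq (z : ℝ) : HasDerivAt (fun z => s * z ^ 2) (2 * s * z) z := by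
    simpa [mul_comm, mul_left_comm, mul_assoc] using (hasDerivAt_pow 2 z).const_mul s
  have hlin (z : ℝ) : HasDerivAt (fun z => 2 * s * z) (2 * s) z := by
    simpa using (hasDerivAt_id z).const_mul (2 * s)
  have hconv : ConvexOn ℝ S fun z => f z - s * z ^ 2 :=
    convexOn_of_hasDerivWithinAt2_nonneg hS (f' := fun z => f' z - 2 * s * z)
      (f'' := fun z => f'' z - 2 * s)
      (fun z _ => ((hf z).sub (hsq z)).continuousAt.continuousWithinAt)
      (fun z _ => ((hf z).sub (hsq z)).hasDerivWithinAt)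
      (fun z _ => ((hf' z).sub (hlin z)).hasDerivWithinAt)
      (fun z hz => sub_nonneg.mpr (hf'' z hz))
  have := hconv.add_mul_sub_le_of_hasDerivAt hx hy ((hf x).sub (hsq x))
  linear_combination this

lemma Real.hasDerivAt_log_one_add_exp (x : ℝ) :
    HasDerivAt (fun x => log (1 + exp x)) (exp x / (1 + exp x)) x := by
  simpa using ((hasDerivAt_exp x).const_add 1).log (by positivity)

lemma Real.hasDerivAt_exp_div_one_add_exp (x : ℝ) :
    HasDerivAt (fun x => exp x / (1 + exp x)) (exp x / (1 + exp x) ^ 2) x := by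
  refine ((hasDerivAt_exp x).div ((hasDerivAt_exp x).const_add 1) (by positivity)).congr_deriv ?_
  ring

lemma Real.exp_div_one_add_exp_sq (x : ℝ) : exp x / (1 + exp x) ^ 2 = (2 * (1 + cosh x))⁻¹ := by
  rw [cosh_eq, exp_neg]
  field_simp
  ring

lemma Real.exp_div_one_add_exp_sq_le {M x : ℝ} (hx : |x| ≤ M) :
    exp M / (1 + exp M) ^ 2 ≤ exp x / (1 + exp x) ^ 2 := by
  rw [exp_div_one_add_exp_sq, exp_div_one_add_exp_sq]
  gcongr
  exact cosh_le_cosh.mpr (hx.trans (le_abs_self M))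

lemma Real.log_one_add_exp_bregman_ge {M t u : ℝ} (ht : |t| ≤ M) (hu : |u| ≤ M) :
    exp M / (2 * (1 + exp M) ^ 2) * (u - t) ^ 2 ≤
      log (1 + exp u) - log (1 + exp t) - exp t / (1 + exp t) * (u - t) := by
  have hS : ∀ z ∈ interior (Icc (-M) M), 2 * (exp M / (2 * (1 + exp M) ^ 2)) ≤
      exp z / (1 + exp z) ^ 2 := fun z hz => by
    rw [interior_Icc] at hz
    have := exp_div_one_add_exp_sq_le (abs_le.mpr ⟨hz.1.le, hz.2.le⟩)
    field_simp at this ⊢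
    linarith
  have := add_mul_sub_add_mul_sq_le_of_hasDerivAt (convex_Icc (-M) M)
    hasDerivAt_log_one_add_exp hasDerivAt_exp_div_one_add_exp hS (abs_le.mp ht) (abs_le.mp hu)
  linarith

section Probability

variable {Ω : Type*} {m mΩ : MeasurableSpace Ω} {μ : Measure Ω} [IsFiniteMeasure μ]

lemma Continuous.integrable_comp_of_ae_abs_le {h : ℝ → ℝ} (hh : Continuous h) {f : Ω → ℝ}
    (hf : AEStronglyMeasurable f μ) {M : ℝ} (hfM : ∀ᵐ ω ∂μ, |f ω| ≤ M) :
    Integrable (fun ω => h (f ω)) μ := by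
  obtain ⟨C, hC⟩ := isCompact_Icc.exists_bound_of_continuousOn (hh.continuousOn (s := Icc (-M) M))
  refine Integrable.of_bound (hh.comp_aestronglyMeasurable hf) C ?_
  filter_upwards [hfM] with ω hω using hC _ (abs_le.mp hω)

lemma integral_mul_eq_of_condExp_ae_eq (hm : m ≤ mΩ) {f g h : Ω → ℝ}
    (hf : StronglyMeasurable[m] f) (hfg : Integrable (fun ω => f ω * g ω) μ)
    (hg : Integrable g μ) (hgh : μ[g | m] =ᵐ[μ] h) :
    ∫ ω, f ω * g ω ∂μ = ∫ ω, f ω * h ω ∂μ := by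
  rw [← integral_condExp hm]
  refine integral_congr_ae ?_
  filter_upwards [condExp_mul_of_stronglyMeasurable_left hf hfg hg, hgh] with ω hω hω'
  rw [← hω', ← Pi.mul_apply f, ← hω]
  rfl

theorem integral_logistic_excess_loss_ge (hm : m ≤ mΩ) {t u Y : Ω → ℝ} {M : ℝ}
    (ht : StronglyMeasurable[m] t) (hu : StronglyMeasurable[m] u) (hY : Integrable Y μ)
    (hcond : μ[Y | m] =ᵐ[μ] fun ω => exp (t ω) / (1 + exp (t ω)))
    (hbound : ∀ᵐ ω ∂μ, |u ω| ≤ M ∧ |t ω| ≤ M) :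
    exp M / (2 * (1 + exp M) ^ 2) * ∫ ω, (u ω - t ω) ^ 2 ∂μ ≤
      ∫ ω, (-Y ω * u ω + log (1 + exp (u ω)) - (-Y ω * t ω + log (1 + exp (t ω)))) ∂μ := by
  have ht' : AEStronglyMeasurable t μ := (ht.mono hm).aestronglyMeasurable
  have hu' : AEStronglyMeasurable u μ := (hu.mono hm).aestronglyMeasurable
  have hΔ : AEStronglyMeasurable (fun ω => u ω - t ω) μ := hu'.sub ht'
  have hΔbound : ∀ᵐ ω ∂μ, |u ω - t ω| ≤ 2 * M := by
    filter_upwards [hbound] with ω h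
    exact (abs_sub _ _).trans (by linarith [h.1, h.2])
  have hpos (x : ℝ) : 1 + exp x ≠ 0 := by positivity
  have hsoftplus : Continuous fun x => log (1 + exp x) :=
    (continuous_const.add continuous_exp).log hpos
  have hlogistic : Continuous fun x => exp x / (1 + exp x) :=
    continuous_exp.div (continuous_const.add continuous_exp) hpos
  have hsq : Integrable (fun ω => (u ω - t ω) ^ 2) μ :=
    (continuous_pow 2).integrable_comp_of_ae_abs_le hΔ hΔbound
  have hB : Integrable (fun ω => log (1 + exp (u ω)) - log (1 + exp (t ω))) μ :=
    (hsoftplus.integrable_comp_of_ae_abs_le hu' (hbound.mono fun _ h => h.1)).sub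
      (hsoftplus.integrable_comp_of_ae_abs_le ht' (hbound.mono fun _ h => h.2))
  have hΔY : Integrable (fun ω => (u ω - t ω) * Y ω) μ :=
    hY.bdd_mul hΔ (c := 2 * M) (by simpa only [Real.norm_eq_abs] using hΔbound)
  have hΔσ : Integrable (fun ω => (u ω - t ω) * (exp (t ω) / (1 + exp (t ω)))) μ :=
    (hlogistic.integrable_comp_of_ae_abs_le ht' (hbound.mono fun _ h => h.2)).bdd_mul hΔ
      (c := 2 * M) (by simpa only [Real.norm_eq_abs] using hΔbound)
  calc exp M / (2 * (1 + exp M) ^ 2) * ∫ ω, (u ω - t ω) ^ 2 ∂μ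
      = ∫ ω, exp M / (2 * (1 + exp M) ^ 2) * (u ω - t ω) ^ 2 ∂μ := (integral_const_mul _ _).symm
    _ ≤ ∫ ω, (log (1 + exp (u ω)) - log (1 + exp (t ω))
          - (u ω - t ω) * (exp (t ω) / (1 + exp (t ω)))) ∂μ := by
      refine integral_mono_ae (hsq.const_mul _) (hB.sub hΔσ) ?_
      filter_upwards [hbound] with ω h
      linarith [log_one_add_exp_bregman_ge h.2 h.1]
    _ = ∫ ω, (log (1 + exp (u ω)) - log (1 + exp (t ω))) ∂μ
          - ∫ ω, (u ω - t ω) * (exp (t ω) / (1 + exp (t ω))) ∂μ := integral_sub hB hΔσ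
    _ = ∫ ω, (log (1 + exp (u ω)) - log (1 + exp (t ω))) ∂μ
          - ∫ ω, (u ω - t ω) * Y ω ∂μ := by
      rw [integral_mul_eq_of_condExp_ae_eq (f := fun ω => u ω - t ω) hm (hu.sub ht) hΔY hY hcond]
    _ = ∫ ω, (log (1 + exp (u ω)) - log (1 + exp (t ω)) - (u ω - t ω) * Y ω) ∂μ :=
      (integral_sub hB hΔY).symm
    _ = _ := integral_congr_ae (ae_of_all _ fun ω => by ring)

end Probability

theorem population_risk_strong_convexity_general {Ω : Type*} [MeasurableSpace Ω]
    (μ : Measure Ω) [IsProbabilityMeasure μ] {p : ℕ}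
    (X : Ω → Fin p → ℝ) (Y : Ω → ℝ) (hXmeas : Measurable X) (hYint : Integrable Y μ)
    (β βs : Fin p → ℝ) (M : ℝ)
    (hcond : μ[Y | MeasurableSpace.comap X inferInstance]
      =ᵐ[μ] fun ω => Real.exp (∑ j, X ω j * βs j) / (1 + Real.exp (∑ j, X ω j * βs j)))
    (hbound : ∀ᵐ ω ∂μ, |∑ j, X ω j * β j| ≤ M ∧ |∑ j, X ω j * βs j| ≤ M) :
    ∫ ω, (logLoss (X ω) (Y ω) β - logLoss (X ω) (Y ω) βs) ∂μ
      ≥ (Real.exp M / (2 * (1 + Real.exp M) ^ 2))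
        * ∫ ω, ((∑ j, X ω j * β j) - ∑ j, X ω j * βs j) ^ 2 ∂μ := by
  have hlin (b : Fin p → ℝ) :
      StronglyMeasurable[MeasurableSpace.comap X inferInstance] fun ω => ∑ j, X ω j * b j :=
    ((by fun_prop : Measurable fun v : Fin p → ℝ => ∑ j, v j * b j).comp
      (comap_measurable X)).stronglyMeasurable
  exact integral_logistic_excess_loss_ge hXmeas.comap_le (hlin βs) (hlin β) hYint hcond hbound

/-- Strong convexity of the population logistic risk at the minimizer `β*`: if
`E[Y|X] = e^{Xβ*}/(1+e^{Xβ*})` and the predictors `Xβ`, `Xβ*` are a.s. bounded by `M`,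
then `E[l(Y,X;β) - l(Y,X;β*)] ≥ s·E[(X(β-β*))²]` with `s = e^M/(2(1+e^M)²)`. -/
theorem population_risk_strong_convexity {Ω : Type*} [MeasurableSpace Ω]
    (μ : Measure Ω) [IsProbabilityMeasure μ] {p : ℕ}
    (X : Ω → Fin p → ℝ) (Y : Ω → ℝ) (hXmeas : Measurable X) (hYmeas : Measurable Y)
    (hY01 : ∀ ω, Y ω = 0 ∨ Y ω = 1) (hYint : Integrable Y μ)
    (β βs : Fin p → ℝ) (M : ℝ) (hM : 0 < M)
    (hmin : ∀ b : Fin p → ℝ, ∫ ω, logLoss (X ω) (Y ω) βs ∂μ ≤ ∫ ω, logLoss (X ω) (Y ω) b ∂μ)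
    (hcond : μ[Y | MeasurableSpace.comap X inferInstance]
      =ᵐ[μ] fun ω => Real.exp (∑ j, X ω j * βs j) / (1 + Real.exp (∑ j, X ω j * βs j)))
    (hbound : ∀ᵐ ω ∂μ, |∑ j, X ω j * β j| ≤ M ∧ |∑ j, X ω j * βs j| ≤ M)
    (hint1 : Integrable (fun ω => logLoss (X ω) (Y ω) β) μ)
    (hint2 : Integrable (fun ω => logLoss (X ω) (Y ω) βs) μ)
    (hint3 : Integrable (fun ω => ((∑ j, X ω j * β j) - ∑ j, X ω j * βs j) ^ 2) μ) :
    ∫ ω, (logLoss (X ω) (Y ω) β - logLoss (X ω) (Y ω) βs) ∂μ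
      ≥ (Real.exp M / (2 * (1 + Real.exp M) ^ 2))
        * ∫ ω, ((∑ j, X ω j * β j) - ∑ j, X ω j * βs j) ^ 2 ∂μ :=
  population_risk_strong_convexity_general μ X Y hXmeas hYint β βs M hcond hbound
end

section
/- Let f: Aⁿ → ℝ satisfy the bounded difference condition with constants c_k: changing the k-th coordinate changes f by at most c_k. If X_1,…,X_n are independent A-valued random variables, then for all t > 0, P(|f(X_1,…,X_n) - E f(X_1,…,X_n)| ≥ t) ≤ 2·exp(-2t²/∑_{i=1}^n c_i²). -/
/-!
Under the product law of independent coordinates, split off the first coordinate: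
`f x - E f = (f x - E₁ f x) + (E₁ f x - E f)`, where `E₁` integrates out `x₀`.
With the other coordinates frozen, the first term ranges over an interval of length `c₀`,
so by Hoeffding's lemma it is sub-Gaussian with variance proxy `c₀² / 4`; the second term is a
function of the remaining coordinates with bounded differences `c₁, …`, sub-Gaussian by
induction. Fubini adds the proxies, and the Chernoff bound for proxy `∑ cᵢ² / 4` on both tails
gives `2 exp (-2 t² / ∑ cᵢ²)`.
-/

open MeasureTheory ProbabilityTheory Real
open scoped NNReal

def HasBoundedDifferences {ι A : Type*} [DecidableEq ι] (f : (ι → A) → ℝ) (c : ι → ℝ) : Prop :=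
  ∀ (k : ι) (x : ι → A) (x' : A), |f x - f (Function.update x k x')| ≤ c k

namespace HasBoundedDifferences

variable {ι A : Type*} [DecidableEq ι] [Fintype ι] {f : (ι → A) → ℝ} {c : ι → ℝ}

theorem abs_sub_le_sum (h : HasBoundedDifferences f c) (x y : ι → A) :
    |f x - f y| ≤ ∑ i, c i := by
  suffices ∀ s : Finset ι, |f x - f (s.piecewise y x)| ≤ ∑ i ∈ s, c i by
    simpa using this Finset.univ
  intro s
  induction s using Finset.induction_on with
  | empty => simp
  | insert a s ha ih =>
    rw [Finset.piecewise_insert, Finset.sum_insert ha, add_comm]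
    calc |f x - f (Function.update (s.piecewise y x) a (y a))|
        ≤ |f x - f (s.piecewise y x)|
          + |f (s.piecewise y x) - f (Function.update (s.piecewise y x) a (y a))| :=
          abs_sub_le _ _ _
      _ ≤ ∑ i ∈ s, c i + c a := add_le_add ih (h _ _ _)

theorem exists_bound (h : HasBoundedDifferences f c) : ∃ C, ∀ x, |f x| ≤ C := by
  rcases isEmpty_or_nonempty (ι → A) with hA | hA
  · exact ⟨0, fun x => isEmptyElim x⟩
  obtain ⟨x₀⟩ := hA
  refine ⟨|f x₀| + ∑ i, c i, fun x => ?_⟩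
  linarith [abs_sub_abs_le_abs_sub (f x) (f x₀), h.abs_sub_le_sum x x₀]

variable [MeasurableSpace A]

theorem integrable (h : HasBoundedDifferences f c) (hf : Measurable f) (μ : Measure (ι → A))
    [IsFiniteMeasure μ] : Integrable f μ :=
  let ⟨C, hC⟩ := h.exists_bound
  .of_bound hf.aestronglyMeasurable C (ae_of_all _ hC)

theorem abs_sub_integral_le (h : HasBoundedDifferences f c) (hf : Measurable f)
    (μ : Measure (ι → A)) [IsProbabilityMeasure μ] (x : ι → A) :
    |f x - ∫ y, f y ∂μ| ≤ ∑ i, c i := by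
  have hsub : f x - ∫ y, f y ∂μ = ∫ y, (f x - f y) ∂μ := by
    rw [integral_sub (integrable_const _) (h.integrable hf μ)]; simp
  rw [hsub, ← Real.norm_eq_abs]
  calc ‖∫ y, (f x - f y) ∂μ‖ ≤ (∑ i, c i) * μ.real Set.univ :=
        norm_integral_le_of_norm_le_const (ae_of_all _ fun y => h.abs_sub_le_sum x y)
    _ = ∑ i, c i := by simp

end HasBoundedDifferences

section SubgaussianProduct

variable {α β : Type*} [MeasurableSpace α] [MeasurableSpace β]

theorem hasSubgaussianMGF_sub_integral_of_abs_sub_le {μ : Measure α} [IsProbabilityMeasure μ]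
    {G : α → ℝ} (hG : Measurable G) {c : ℝ} (hc : ∀ a a', |G a - G a'| ≤ c) :
    HasSubgaussianMGF (fun a => G a - ∫ a', G a' ∂μ) ((‖c‖₊ / 2) ^ 2) μ := by
  have := Measure.nonempty_of_neZero μ
  have hbdd : BddBelow (Set.range G) := ⟨G (Classical.arbitrary α) - c, by
    rintro _ ⟨a, rfl⟩; linarith [(abs_le.1 (hc (Classical.arbitrary α) a)).2]⟩
  have hmem : ∀ a, G a ∈ Set.Icc (⨅ a, G a) ((⨅ a, G a) + c) := by
    intro a
    have : G a - c ≤ ⨅ a', G a' := le_ciInf fun a' => by linarith [(abs_le.1 (hc a a')).2]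
    exact ⟨ciInf_le hbdd a, by linarith⟩
  simpa using hasSubgaussianMGF_of_mem_Icc hG.aemeasurable (ae_of_all μ hmem)

theorem ProbabilityTheory.HasSubgaussianMGF.add_prod {ν : Measure α} {ρ : Measure β}
    [SFinite ν] [SFinite ρ] {X : β → ℝ} {Y : α × β → ℝ} {cX cY : ℝ≥0}
    (hX : HasSubgaussianMGF X cX ρ)
    (hY : ∀ b, HasSubgaussianMGF (fun a => Y (a, b)) cY ν)
    (hint : ∀ t, Integrable (fun p => exp (t * (Y p + X p.2))) (ν.prod ρ)) :
    HasSubgaussianMGF (fun p => Y p + X p.2) (cY + cX) (ν.prod ρ) where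
  integrable_exp_mul := hint
  mgf_le t := calc
    mgf (fun p => Y p + X p.2) (ν.prod ρ) t
        = ∫ b, mgf (fun a => Y (a, b)) ν t * exp (t * X b) ∂ρ := by
          rw [mgf, integral_prod_symm _ (hint t)]
          simp only [mgf, mul_add, exp_add, integral_mul_const]
      _ ≤ ∫ b, exp (cY * t ^ 2 / 2) * exp (t * X b) ∂ρ :=
          integral_mono_of_nonneg
            (ae_of_all _ fun b => mul_nonneg mgf_nonneg (exp_pos _).le)
            ((hX.integrable_exp_mul t).const_mul _)
            (ae_of_all _ fun b => mul_le_mul_of_nonneg_right ((hY b).mgf_le t) (exp_pos _).le)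
      _ = exp (cY * t ^ 2 / 2) * mgf X ρ t := integral_const_mul _ _
      _ ≤ exp (cY * t ^ 2 / 2) * exp (cX * t ^ 2 / 2) := by gcongr; exact hX.mgf_le t
      _ = exp (↑(cY + cX) * t ^ 2 / 2) := by rw [← exp_add]; push_cast; congr 1; ring

theorem hasSubgaussianMGF_sub_integral_prod {ν : Measure α} {ρ : Measure β}
    [IsProbabilityMeasure ν] [IsProbabilityMeasure ρ] {F : α × β → ℝ} (hF : Measurable F)
    {C : ℝ} (hFC : ∀ p, |F p| ≤ C) {c : ℝ} (hc : ∀ a a' b, |F (a, b) - F (a', b)| ≤ c)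
    {cX : ℝ≥0}
    (hX : HasSubgaussianMGF (fun b => ∫ a, F (a, b) ∂ν - ∫ p, F p ∂(ν.prod ρ)) cX ρ) :
    HasSubgaussianMGF (fun p => F p - ∫ q, F q ∂(ν.prod ρ)) ((‖c‖₊ / 2) ^ 2 + cX)
      (ν.prod ρ) := by
  set m := ∫ q, F q ∂(ν.prod ρ)
  have hY : ∀ b, HasSubgaussianMGF (fun a => F (a, b) - ∫ a', F (a', b) ∂ν) ((‖c‖₊ / 2) ^ 2) ν :=
    fun b => hasSubgaussianMGF_sub_integral_of_abs_sub_le (by fun_prop) (hc · · b)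
  have hint : ∀ t, Integrable (fun p => exp (t * (F p - m))) (ν.prod ρ) := fun t =>
    integrable_exp_mul_of_mem_Icc (a := -(C + |m|)) (b := C + |m|) (by fun_prop)
      (ae_of_all _ fun p => abs_le.1 <| (abs_sub _ _).trans (by gcongr; exact hFC p))
  simpa only [sub_add_sub_cancel] using hX.add_prod (Y := fun p => F p - ∫ a, F (a, p.2) ∂ν) hY
    (by simpa only [sub_add_sub_cancel] using hint)

end SubgaussianProduct

section FinCons

variable {A : Type*} [MeasurableSpace A] {n : ℕ}

theorem measurable_fin_cons_prod :
    Measurable fun p : A × (Fin n → A) => (Fin.cons p.1 p.2 : Fin (n + 1) → A) := by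
  convert (MeasurableEquiv.piFinSuccAbove (fun _ : Fin (n + 1) => A) 0).symm.measurable using 1
  funext p
  simp [MeasurableEquiv.piFinSuccAbove_symm_apply, Fin.insertNthEquiv, Fin.insertNth_zero']

theorem HasBoundedDifferences.integral_cons {f : (Fin (n + 1) → A) → ℝ} {c : Fin (n + 1) → ℝ}
    (h : HasBoundedDifferences f c) (hf : Measurable f) (ν : Measure A) [IsProbabilityMeasure ν] :
    HasBoundedDifferences (fun x => ∫ y, f (Fin.cons y x) ∂ν) (fun j => c j.succ) := by
  intro k x a
  obtain ⟨C, hC⟩ := h.exists_bound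
  have hint : ∀ x : Fin n → A, Integrable (fun y => f (Fin.cons y x)) ν := fun x =>
    .of_bound (hf.comp (measurable_fin_cons_prod.comp (measurable_id.prodMk measurable_const))
      ).aestronglyMeasurable C (ae_of_all _ fun y => hC _)
  rw [← integral_sub (hint x) (hint _), ← Real.norm_eq_abs]
  calc ‖∫ y, (f (Fin.cons y x) - f (Fin.cons y (Function.update x k a))) ∂ν‖
      ≤ c k.succ * ν.real Set.univ :=
        norm_integral_le_of_norm_le_const (ae_of_all _ fun y => by
          rw [Fin.cons_update]; exact h _ _ _)
    _ = c k.succ := by simp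

theorem HasBoundedDifferences.hasSubgaussianMGF_pi :
    ∀ {n : ℕ} (μ : Fin n → Measure A) [∀ i, IsProbabilityMeasure (μ i)]
      {f : (Fin n → A) → ℝ} {c : Fin n → ℝ}, Measurable f → HasBoundedDifferences f c →
      HasSubgaussianMGF (fun x => f x - ∫ y, f y ∂Measure.pi μ) (∑ i, (‖c i‖₊ / 2) ^ 2)
        (Measure.pi μ)
  | 0, μ, _, f, c, hf, h => by
    have hzero : ∀ x, f x - ∫ y, f y ∂Measure.pi μ = 0 := fun x =>
      abs_nonpos_iff.1 ((h.abs_sub_integral_le hf _ x).trans_eq (by simp))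
    simp [hzero]
  | n + 1, μ, _, f, c, hf, h => by
    set e := MeasurableEquiv.piFinSuccAbove (fun _ : Fin (n + 1) => A) 0
    have hmap : (Measure.pi μ).map e = (μ 0).prod (Measure.pi fun j => μ j.succ) :=
      (measurePreserving_piFinSuccAbove μ 0).map_eq
    have hcons : ∀ x, (Fin.cons (e x).1 (e x).2 : Fin (n + 1) → A) = x := fun x => by
      simp [e, MeasurableEquiv.piFinSuccAbove]
    set F : A × (Fin n → A) → ℝ := fun p => f (Fin.cons p.1 p.2)
    have hF : Measurable F := hf.comp measurable_fin_cons_prod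
    obtain ⟨C, hC⟩ := h.exists_bound
    have hmean : ∫ y, f y ∂Measure.pi μ = ∫ p, F p ∂(Measure.pi μ).map e := by
      rw [integral_map_equiv]; simp only [F, hcons]
    have hmean_prod : ∫ x, ∫ y, F (y, x) ∂μ 0 ∂Measure.pi (fun j => μ j.succ)
        = ∫ p, F p ∂(μ 0).prod (Measure.pi fun j => μ j.succ) :=
      (integral_prod_symm F
        (.of_bound hF.aestronglyMeasurable C (ae_of_all _ fun p => hC _))).symm
    have hX := hasSubgaussianMGF_pi (fun j => μ j.succ)
      (hF.stronglyMeasurable.integral_prod_left' (μ := μ 0)).measurable (h.integral_cons hf (μ 0))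
    rw [hmean_prod] at hX
    have hprod := hasSubgaussianMGF_sub_integral_prod hF (fun p => hC _)
      (fun a a' b => by simpa [Fin.update_cons_zero] using h 0 (Fin.cons a b) a') hX
    rw [← hmap, ← hmean] at hprod
    rw [Fin.sum_univ_succ]
    simpa [Function.comp_def, F, hcons] using hprod.of_map e.measurable.aemeasurable

end FinCons

theorem ProbabilityTheory.HasSubgaussianMGF.measureReal_abs_ge_le {Ω : Type*} [MeasurableSpace Ω]
    {μ : Measure Ω} [IsFiniteMeasure μ] {X : Ω → ℝ} {c : ℝ≥0} (h : HasSubgaussianMGF X c μ)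
    {ε : ℝ} (hε : 0 ≤ ε) : μ.real {ω | ε ≤ |X ω|} ≤ 2 * exp (-ε ^ 2 / (2 * c)) := by
  have hsub : {ω | ε ≤ |X ω|} ⊆ {ω | ε ≤ X ω} ∪ {ω | ε ≤ (-X) ω} := fun ω hω => by
    rcases le_abs.1 (Set.mem_ofPred.1 hω) with h | h
    exacts [Or.inl h, Or.inr h]
  calc μ.real {ω | ε ≤ |X ω|} ≤ μ.real {ω | ε ≤ X ω} + μ.real {ω | ε ≤ (-X) ω} :=
        (measureReal_mono hsub).trans (measureReal_union_le _ _)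
    _ ≤ exp (-ε ^ 2 / (2 * c)) + exp (-ε ^ 2 / (2 * c)) :=
        add_le_add (h.measure_ge_le hε) (h.neg.measure_ge_le hε)
    _ = 2 * exp (-ε ^ 2 / (2 * c)) := (two_mul _).symm

/-- McDiarmid's (bounded difference) inequality: if `f` satisfies the bounded
difference condition with constants `c k` and `X_1, …, X_n` are independent, then
`P(|f(X) - E f(X)| ≥ t) ≤ 2 exp(-2t²/∑ c_i²)`. -/
theorem mcdiarmid_inequality {Ω A : Type*} [MeasurableSpace Ω] [MeasurableSpace A]
    (μ : Measure Ω) [IsProbabilityMeasure μ] {n : ℕ}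
    (X : Fin n → Ω → A) (hXmeas : ∀ i, Measurable (X i))
    (hindep : iIndepFun X μ)
    (f : (Fin n → A) → ℝ) (hf : Measurable f) (c : Fin n → ℝ)
    (hbd : ∀ (k : Fin n) (x : Fin n → A) (x' : A),
      |f x - f (Function.update x k x')| ≤ c k)
    (t : ℝ) (ht : 0 < t) :
    μ {ω | t ≤ |f (fun i => X i ω) - ∫ ω', f (fun i => X i ω') ∂μ|}
      ≤ ENNReal.ofReal (2 * Real.exp (-2 * t ^ 2 / ∑ i, c i ^ 2)) := by
  have hXvec : Measurable fun ω i => X i ω := measurable_pi_lambda _ hXmeas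
  have hlaw : μ.map (fun ω i => X i ω) = Measure.pi fun i => μ.map (X i) :=
    (iIndepFun_iff_map_fun_eq_pi_map fun i => (hXmeas i).aemeasurable).1 hindep
  have := fun i => Measure.isProbabilityMeasure_map (μ := μ) (hXmeas i).aemeasurable
  have hsg := HasBoundedDifferences.hasSubgaussianMGF_pi (fun i => μ.map (X i)) hf hbd
  rw [← hlaw] at hsg
  rw [← integral_map hXvec.aemeasurable hf.aestronglyMeasurable,
    ENNReal.le_ofReal_iff_toReal_le (measure_ne_top _ _) (by positivity)]
  have hK : (2 * ((∑ i, (‖c i‖₊ / 2) ^ 2 : ℝ≥0) : ℝ)) = (∑ i, c i ^ 2) / 2 := by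
    push_cast; simp [div_pow, ← Finset.sum_div]; ring
  convert (hsg.of_map hXvec.aemeasurable).measureReal_abs_ge_le ht.le using 3
  · rfl
  · rw [hK, div_div_eq_mul_div]; ring
end
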